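/- Improved Temple bound at the bottom of the spectrum: Let A be a self-adjoint operator whose smallest spectral point α = λ_min(A) is an isolated eigenvalue with complete eigenspace X, and let β > α be the next-nearest point of the spectrum. Let y ≠ 0 satisfy α < ρ(y) < β, set x = P_X y and S = span{x,y}. Then x ≠ 0, x ≠ y (so dim S = 2) and (β − ρ(y))(ρ(y) − α) ≤ ‖P_S r(y)‖²/‖y‖². -/

import Mathlib

/-!
Write `y = x + z` with `x = P_X y` and `z ⊥ X`. Since `α` is isolated at the bottom of the
spectrum, `⟪z, A z⟫ ≥ β ‖z‖²`: the operator `(A - α)² (A - β)` has nonnegative spectrum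
(spectral inclusion for real polynomials of a self-adjoint operator), hence is a positive
operator, so `A - β` is positive on the range of `A - α`, whose closure is `X^⊥`. Comparing
`ρ(y) ‖y‖² = α ‖x‖² + ⟪z, A z⟫` with this bound gives `(β - ρ) ‖z‖² ≤ (ρ - α) ‖x‖²`. The vector
`u = ‖z‖² x - ‖x‖² z ∈ S` satisfies `⟪u, r(y)⟫ = (α - ρ) ‖x‖² ‖y‖²` and
`‖u‖² = ‖x‖² ‖z‖² ‖y‖²`, and Cauchy–Schwarz for `⟪u, P_S r(y)⟫` closes the argument.
-/

open scoped RealInnerProductSpace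
open Submodule

noncomputable section

variable {H : Type*} [NormedAddCommGroup H] [InnerProductSpace ℝ H]

/-- The Rayleigh quotient of `x` with respect to `A`. -/
def rq (A : H →L[ℝ] H) (x : H) : ℝ := ⟪x, A x⟫ / ⟪x, x⟫

/-- The residual of `x` with respect to `A`. -/
def res (A : H →L[ℝ] H) (x : H) : H := A x - rq A x • x

def ang (x y : H) : ℝ := Real.arccos (|⟪x, y⟫| / (‖x‖ * ‖y‖))

open Polynomial

theorem isSelfAdjoint_aeval {R : Type*} [Ring R] [StarRing R] [Algebra ℝ R] [StarModule ℝ R]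
    {a : R} (ha : IsSelfAdjoint a) (p : ℝ[X]) : IsSelfAdjoint (aeval a p) := by
  induction p using Polynomial.induction_on' with
  | add p q hp hq => rw [map_add]; exact hp.add hq
  | monomial n r => rw [aeval_monomial, ← Algebra.smul_def]; exact .smul (.all r) (ha.pow n)

theorem isUnit_aeval_X_sub_C {R A : Type*} [CommRing R] [Ring A] [Algebra R A] {a : A} {r : R}
    (hr : r ∉ spectrum R a) : IsUnit (aeval a (X - C r)) := by
  rw [map_sub, aeval_X, aeval_C, ← neg_sub]
  exact (spectrum.notMem_iff.mp hr).neg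

section CompleteSpace

variable [CompleteSpace H]

theorem IsSelfAdjoint.norm_le_of_forall_spectrum_abs_le {T : H →L[ℝ] H} (hT : IsSelfAdjoint T)
    {R : ℝ} (hR : 0 ≤ R) (hσ : ∀ k ∈ spectrum ℝ T, |k| ≤ R) : ‖T‖ ≤ R := by
  have : spectralRadius ℝ T ≤ ENNReal.ofReal R := by
    refine iSup₂_le fun k hk => ?_
    rw [← enorm_eq_nnnorm, ← ofReal_norm, Real.norm_eq_abs]
    exact ENNReal.ofReal_le_ofReal (hσ k hk)
  rwa [ContinuousLinearMap.spectralRadius_eq_nnnorm T hT, ← enorm_eq_nnnorm, ← ofReal_norm,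
    ENNReal.ofReal_le_ofReal_iff hR] at this

theorem IsSelfAdjoint.mul_norm_sq_le_inner_of_forall_spectrum {A : H →L[ℝ] H}
    (hA : IsSelfAdjoint A) {c : ℝ} (hc : ∀ t ∈ spectrum ℝ A, c ≤ t) (v : H) :
    c * ‖v‖ ^ 2 ≤ ⟪v, A v⟫ := by
  rcases subsingleton_or_nontrivial H with hH | hH
  · simp [Subsingleton.elim v 0]
  -- `M - A` has spectrum in `[0, M - c]`, so its norm is at most `M - c`.
  set M := ‖A‖ + |c|
  have hAM : ‖A‖ ≤ M := le_add_of_nonneg_right (abs_nonneg c)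
  have hcM : c ≤ M := by linarith [le_abs_self c, norm_nonneg A]
  set T : H →L[ℝ] H := algebraMap ℝ _ M - A
  have hT : ‖T‖ ≤ M - c := by
    refine ((IsSelfAdjoint.algebraMap _ (.all M)).sub hA).norm_le_of_forall_spectrum_abs_le
      (sub_nonneg.mpr hcM) fun k hk => ?_
    rw [← spectrum.singleton_sub_eq] at hk
    obtain ⟨_, rfl, t, ht, rfl⟩ := hk
    have ht' := abs_le.mp ((Real.norm_eq_abs t).symm ▸ spectrum.norm_le_norm_of_mem ht)
    exact abs_le.mpr ⟨by linarith, by linarith [hc t ht]⟩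
  have hTv : ⟪v, T v⟫ = M * ‖v‖ ^ 2 - ⟪v, A v⟫ := by
    simp [T, inner_sub_right, real_inner_smul_right, Algebra.algebraMap_eq_smul_one]
  have := (real_inner_le_norm v (T v)).trans
    (mul_le_mul_of_nonneg_left (T.le_opNorm v) (norm_nonneg v))
  nlinarith [sq_nonneg ‖v‖]

theorem IsSelfAdjoint.isUnit_aeval_quadratic {A : H →L[ℝ] H} (hA : IsSelfAdjoint A) {b c : ℝ}
    (hbc : b ^ 2 < 4 * c) : IsUnit (aeval A (X ^ 2 - C b * X + C c)) := by
  refine (aeval A _).isUnit_of_forall_le_norm_inner_map (c := ⟨c - b ^ 2 / 4, by linarith⟩)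
    (by change (0 : ℝ) < c - b ^ 2 / 4; linarith) fun v => ?_
  have hinner :
      ⟪aeval A (X ^ 2 - C b * X + C c) v, v⟫ = ‖A v‖ ^ 2 - b * ⟪A v, v⟫ + c * ‖v‖ ^ 2 := by
    have hAA : ⟪A (A v), v⟫ = ⟪A v, A v⟫ := hA.isSymmetric (A v) v
    simp [Algebra.algebraMap_eq_smul_one, sq, inner_add_left, inner_sub_left,
      real_inner_smul_left, hAA]
  have hcs : |b * ⟪A v, v⟫| ≤ |b| * (‖A v‖ * ‖v‖) := by
    rw [abs_mul]; exact mul_le_mul_of_nonneg_left (abs_real_inner_le_norm _ _) (abs_nonneg b)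
  change ‖v‖ ^ 2 * (c - b ^ 2 / 4) ≤ _
  rw [hinner, Real.norm_eq_abs]
  refine le_trans ?_ (le_abs_self _)
  nlinarith [abs_le.mp hcs, sq_nonneg (‖A v‖ - |b| / 2 * ‖v‖), sq_abs b, norm_nonneg v,
    norm_nonneg (A v)]

theorem IsSelfAdjoint.isUnit_aeval_of_irreducible {A : H →L[ℝ] H} (hA : IsSelfAdjoint A)
    {p : ℝ[X]} (hp : Irreducible p) (hroot : ∀ t ∈ spectrum ℝ A, ¬p.IsRoot t) :
    IsUnit (aeval A p) := by
  suffices ∃ q, q ∣ p ∧ ¬IsUnit q ∧ IsUnit (aeval A q) by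
    obtain ⟨q, ⟨k, rfl⟩, hq, hAq⟩ := this
    rw [map_mul]
    exact hAq.mul (((hp.isUnit_or_isUnit rfl).resolve_left hq).map (aeval A))
  -- A complex root of `p` yields a linear or an irreducible quadratic real factor.
  obtain ⟨z, hz⟩ := IsAlgClosed.exists_aeval_eq_zero ℂ p (degree_pos_of_irreducible hp).ne'
  by_cases him : z.im = 0
  · have hre : p.IsRoot z.re := by
      have hz' : ((z.re : ℝ) : ℂ) = z := Complex.ext rfl (by simp [him])
      rw [← hz', ← Complex.coe_algebraMap, aeval_algebraMap_apply_eq_algebraMap_eval] at hz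
      exact (FaithfulSMul.algebraMap_eq_zero_iff ℝ ℂ).mp hz
    exact ⟨X - C z.re, dvd_iff_isRoot.mpr hre, not_isUnit_X_sub_C _,
      isUnit_aeval_X_sub_C fun h => hroot _ h hre⟩
  · refine ⟨_, quadratic_dvd_of_aeval_eq_zero_im_ne_zero p hz him, ?_,
      hA.isUnit_aeval_quadratic ?_⟩
    · refine not_isUnit_of_natDegree_pos _ ?_
      rw [show natDegree (X ^ 2 - C (2 * z.re) * X + C (‖z‖ ^ 2)) = 2 by compute_degree!]
      norm_num
    · rw [Complex.sq_norm, Complex.normSq_apply]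
      nlinarith [mul_self_pos.mpr him]

theorem IsSelfAdjoint.isUnit_aeval {A : H →L[ℝ] H} (hA : IsSelfAdjoint A) {p : ℝ[X]}
    (hp : p ≠ 0) (hroot : ∀ t ∈ spectrum ℝ A, ¬p.IsRoot t) : IsUnit (aeval A p) := by
  induction p using UniqueFactorizationMonoid.induction_on_prime with
  | h₁ => exact absurd rfl hp
  | h₂ u hu => exact hu.map _
  | h₃ p q hp0 hq ih =>
    rw [map_mul]
    exact (hA.isUnit_aeval_of_irreducible hq.irreducible fun t ht h =>
      hroot t ht (root_mul.mpr (.inl h))).mul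
        (ih hp0 fun t ht h => hroot t ht (root_mul.mpr (.inr h)))

theorem IsSelfAdjoint.spectrum_aeval_subset {A : H →L[ℝ] H} (hA : IsSelfAdjoint A) {p : ℝ[X]}
    (hp : 0 < p.natDegree) : spectrum ℝ (aeval A p) ⊆ (fun t => p.eval t) '' spectrum ℝ A := by
  intro μ hμ
  by_contra hμA
  refine spectrum.mem_iff.mp hμ ?_
  rw [← aeval_C A μ, ← map_sub]
  refine hA.isUnit_aeval (fun h => ?_) fun t ht h => hμA ⟨t, ht, ?_⟩
  · rw [sub_eq_zero] at h
    simp [← h] at hp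
  · rw [IsRoot.def, eval_sub, eval_C, sub_eq_zero] at h
    exact h.symm

theorem inner_map_nonneg_of_mem_orthogonal_ker {N B : H →L[ℝ] H} (hN : IsSelfAdjoint N)
    (hNB : ∀ v, 0 ≤ ⟪N v, B (N v)⟫) {w : H} (hw : w ∈ (LinearMap.ker (N : H →ₗ[ℝ] H))ᗮ) :
    0 ≤ ⟪w, B w⟫ := by
  rw [ContinuousLinearMap.orthogonal_ker, hN.adjoint_eq, ← SetLike.mem_coe,
    Submodule.topologicalClosure_coe] at hw
  refine closure_minimal ?_
    (isClosed_le continuous_const (by fun_prop : Continuous fun u : H => ⟪u, B u⟫)) hw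
  rintro _ ⟨v, rfl⟩
  exact hNB v

theorem IsSelfAdjoint.mul_norm_sq_le_inner_of_mem_orthogonal_ker {A : H →L[ℝ] H}
    (hA : IsSelfAdjoint A) {α β : ℝ} (hσ : ∀ t ∈ spectrum ℝ A, t = α ∨ β ≤ t) {w : H}
    (hw : w ∈ (LinearMap.ker ((A - α • (1 : H →L[ℝ] H) : H →L[ℝ] H) : H →ₗ[ℝ] H))ᗮ) :
    β * ‖w‖ ^ 2 ≤ ⟪w, A w⟫ := by
  set N : H →L[ℝ] H := A - α • 1
  set B : H →L[ℝ] H := A - β • 1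
  set p : ℝ[X] := (X - C α) ^ 2 * (X - C β)
  have hp : aeval A p = N * N * B := by
    simp [p, N, B, Algebra.algebraMap_eq_smul_one, sq]
  have hσp : ∀ t ∈ spectrum ℝ (aeval A p), 0 ≤ t := by
    intro _ ht
    obtain ⟨s, hs, rfl⟩ := hA.spectrum_aeval_subset
      (by rw [show p.natDegree = 3 by simp only [p]; compute_degree!]; norm_num) ht
    rcases hσ s hs with rfl | hs
    · simp [p]
    · simp only [p, eval_mul, eval_pow, eval_sub, eval_X, eval_C]
      exact mul_nonneg (sq_nonneg _) (sub_nonneg.mpr hs)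
  have hN : IsSelfAdjoint N := hA.sub (.smul (.all α) (.one _))
  have hcomm : Commute N B := by
    have h (r : ℝ) : A - r • (1 : H →L[ℝ] H) = aeval A (X - C r) := by
      simp [Algebra.algebraMap_eq_smul_one]
    simp only [N, B, h]
    exact (Commute.all _ _).map _
  have hNB : ∀ v, 0 ≤ ⟪N v, B (N v)⟫ := by
    intro v
    rw [show ⟪N v, B (N v)⟫ = ⟪v, N (B (N v))⟫ from hN.isSymmetric _ _, ← mul_apply_eq_comp,
      ← mul_apply_eq_comp, mul_assoc, ← hcomm.eq, ← mul_assoc, ← hp]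
    simpa using (isSelfAdjoint_aeval hA p).mul_norm_sq_le_inner_of_forall_spectrum hσp v
  have := inner_map_nonneg_of_mem_orthogonal_ker hN hNB hw
  simp only [B, sub_apply, smul_apply, one_apply_eq_self, inner_sub_right, real_inner_smul_right,
    real_inner_self_eq_norm_sq] at this
  linarith

end CompleteSpace

theorem rq_mul_norm_sq (A : H →L[ℝ] H) (v : H) : rq A v * ‖v‖ ^ 2 = ⟪v, A v⟫ := by
  rcases eq_or_ne v 0 with rfl | hv
  · simp
  · rw [rq, real_inner_self_eq_norm_sq]
    field_simp

theorem inner_self_res (A : H →L[ℝ] H) (v : H) : ⟪v, res A v⟫ = 0 := by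
  rw [res, inner_sub_right, real_inner_smul_right, real_inner_self_eq_norm_sq, rq_mul_norm_sq,
    sub_self]

theorem Submodule.inner_sq_le_norm_sq_mul_norm_starProjection_sq (S : Submodule ℝ H)
    [S.HasOrthogonalProjection] {u : H} (hu : u ∈ S) (v : H) :
    ⟪u, v⟫ ^ 2 ≤ ‖u‖ ^ 2 * ‖S.starProjection v‖ ^ 2 := by
  have h := S.inner_starProjection_left_eq_right u v
  rw [S.starProjection_eq_self_iff.mpr hu] at h
  rw [h, ← mul_pow, ← sq_abs]
  exact pow_le_pow_left₀ (abs_nonneg _) (abs_real_inner_le_norm _ _) 2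

theorem rq_add_mul_norm_sq {A : H →L[ℝ] H} (hA : (A : H →ₗ[ℝ] H).IsSymmetric) {α : ℝ}
    {x z : H} (hAx : A x = α • x) (hxz : ⟪x, z⟫ = 0) :
    rq A (x + z) * ‖x + z‖ ^ 2 = α * ‖x‖ ^ 2 + ⟪z, A z⟫ := by
  have hzx : ⟪z, x⟫ = 0 := by rw [real_inner_comm, hxz]
  have hxAz : ⟪x, A z⟫ = 0 := by
    rw [← show ⟪A x, z⟫ = ⟪x, A z⟫ from hA x z, hAx, real_inner_smul_left, hxz, mul_zero]
  simp only [rq_mul_norm_sq, map_add, inner_add_left, inner_add_right, hAx, real_inner_smul_right,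
    real_inner_self_eq_norm_sq, hzx, hxAz]
  ring

theorem inner_res_add_left {A : H →L[ℝ] H} (hA : (A : H →ₗ[ℝ] H).IsSymmetric) {α : ℝ}
    {x z : H} (hAx : A x = α • x) (hxz : ⟪x, z⟫ = 0) :
    ⟪x, res A (x + z)⟫ = (α - rq A (x + z)) * ‖x‖ ^ 2 := by
  have hxy : ⟪x, x + z⟫ = ‖x‖ ^ 2 := by
    rw [inner_add_right, hxz, real_inner_self_eq_norm_sq, add_zero]
  rw [res, inner_sub_right, ← show ⟪A x, x + z⟫ = ⟪x, A (x + z)⟫ from hA x _, hAx, real_inner_smul_left, real_inner_smul_right, hxy]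
  ring

theorem sq_sub_rq_mul_le_norm_starProjection_res_sq {A : H →L[ℝ] H}
    (hA : (A : H →ₗ[ℝ] H).IsSymmetric) {α : ℝ} {x z : H} (hAx : A x = α • x) (hxz : ⟪x, z⟫ = 0)
    (hx : x ≠ 0) (S : Submodule ℝ H) [S.HasOrthogonalProjection] (hxS : x ∈ S) (hzS : z ∈ S) :
    (rq A (x + z) - α) ^ 2 * ‖x‖ ^ 2 * ‖x + z‖ ^ 2
      ≤ ‖z‖ ^ 2 * ‖S.starProjection (res A (x + z))‖ ^ 2 := by
  set y := x + z
  set ρ := rq A y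
  set r := res A y
  have hnorm : ‖y‖ ^ 2 = ‖x‖ ^ 2 + ‖z‖ ^ 2 := by
    rw [norm_add_sq_real, hxz]; ring
  have hxr : ⟪x, r⟫ = (α - ρ) * ‖x‖ ^ 2 := inner_res_add_left hA hAx hxz
  have hzr : ⟪z, r⟫ = (ρ - α) * ‖x‖ ^ 2 := by
    have := inner_self_res A y
    rw [inner_add_left, hxr] at this
    linarith
  -- `u` is the component of `x` orthogonal to `y`, scaled by `‖y‖²`.
  set u := ‖z‖ ^ 2 • x - ‖x‖ ^ 2 • z
  have hur : ⟪u, r⟫ = (α - ρ) * ‖x‖ ^ 2 * ‖y‖ ^ 2 := by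
    rw [inner_sub_left, real_inner_smul_left, real_inner_smul_left, hxr, hzr, hnorm]
    ring
  have hu : ‖u‖ ^ 2 = ‖x‖ ^ 2 * ‖z‖ ^ 2 * ‖y‖ ^ 2 := by
    rw [norm_sub_sq_real, real_inner_smul_left, real_inner_smul_right, hxz, norm_smul, norm_smul,
      hnorm]
    simp only [norm_pow, norm_norm]
    ring
  have hcs := S.inner_sq_le_norm_sq_mul_norm_starProjection_sq (u := u)
    (S.sub_mem (S.smul_mem _ hxS) (S.smul_mem _ hzS)) r
  rw [hur, hu] at hcs
  have hxy : 0 < ‖x‖ ^ 2 * ‖y‖ ^ 2 := mul_pos (by positivity) (by rw [hnorm]; positivity)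
  refine le_of_mul_le_mul_left ?_ hxy
  calc _ = ((α - ρ) * ‖x‖ ^ 2 * ‖y‖ ^ 2) ^ 2 := by ring
    _ ≤ _ := hcs
    _ = _ := by ring

theorem improved_temple_bound {A : H →L[ℝ] H} (hA : (A : H →ₗ[ℝ] H).IsSymmetric) {α β : ℝ}
    {x z : H} (hAx : A x = α • x) (hxz : ⟪x, z⟫ = 0) (hz : β * ‖z‖ ^ 2 ≤ ⟪z, A z⟫) (hx : x ≠ 0)
    (hz0 : z ≠ 0) (hρ : α ≤ rq A (x + z)) (S : Submodule ℝ H) [S.HasOrthogonalProjection]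
    (hxS : x ∈ S) (hzS : z ∈ S) :
    (β - rq A (x + z)) * (rq A (x + z) - α)
      ≤ ‖S.starProjection (res A (x + z))‖ ^ 2 / ‖x + z‖ ^ 2 := by
  set ρ := rq A (x + z)
  have hnorm : ‖x + z‖ ^ 2 = ‖x‖ ^ 2 + ‖z‖ ^ 2 := by
    rw [norm_add_sq_real, hxz]; ring
  have hy2 : 0 < ‖x + z‖ ^ 2 := by rw [hnorm]; positivity
  have hgap : (β - ρ) * ‖z‖ ^ 2 ≤ (ρ - α) * ‖x‖ ^ 2 := by
    have := rq_add_mul_norm_sq hA hAx hxz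
    rw [hnorm] at this
    linarith
  rw [le_div_iff₀ hy2]
  refine le_of_mul_le_mul_left ?_ (by positivity : 0 < ‖z‖ ^ 2)
  calc ‖z‖ ^ 2 * ((β - ρ) * (ρ - α) * ‖x + z‖ ^ 2)
      = (β - ρ) * ‖z‖ ^ 2 * ((ρ - α) * ‖x + z‖ ^ 2) := by ring
    _ ≤ (ρ - α) * ‖x‖ ^ 2 * ((ρ - α) * ‖x + z‖ ^ 2) :=
        mul_le_mul_of_nonneg_right hgap (mul_nonneg (sub_nonneg.mpr hρ) hy2.le)
    _ = (ρ - α) ^ 2 * ‖x‖ ^ 2 * ‖x + z‖ ^ 2 := by ring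
    _ ≤ _ := sq_sub_rq_mul_le_norm_starProjection_res_sq hA hAx hxz hx S hxS hzS

theorem stmt_18_general [CompleteSpace H] (A : H →L[ℝ] H) (hA : IsSelfAdjoint A)
    (α β : ℝ)
    (hαmin : ∀ t ∈ spectrum ℝ A, α ≤ t)
    (hgap : spectrum ℝ A ∩ Set.Ioo α β = ∅)
    (X : Submodule ℝ H) [HasOrthogonalProjection X]
    (hX : X = LinearMap.ker ((A - α • (1 : H →L[ℝ] H) : H →L[ℝ] H) : H →ₗ[ℝ] H))
    (y : H) (hy : y ≠ 0) (hρ₁ : α < rq A y) (hρ₂ : rq A y < β)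
    (S : Submodule ℝ H) [FiniteDimensional ℝ S]
    (hS : S = Submodule.span ℝ ({(orthogonalProjection X y : H), y} : Set H)) :
    (orthogonalProjection X y : H) ≠ 0 ∧ (orthogonalProjection X y : H) ≠ y ∧
    (β - rq A y) * (rq A y - α)
      ≤ ‖(orthogonalProjection S (res A y) : H)‖ ^ 2 / ‖y‖ ^ 2 := by
  set x := (orthogonalProjection X y : H)
  have hxX : x ∈ X := SetLike.coe_mem _
  have hzX : y - x ∈ Xᗮ := Submodule.sub_starProjection_mem_orthogonal (K := X) y
  have hAx : A x = α • x := by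
    have hx : x ∈ LinearMap.ker ((A - α • (1 : H →L[ℝ] H) : H →L[ℝ] H) : H →ₗ[ℝ] H) := hX ▸ hxX
    simpa [sub_eq_zero] using hx
  have hσ : ∀ t ∈ spectrum ℝ A, t = α ∨ β ≤ t := fun t ht =>
    (hαmin t ht).eq_or_lt.imp Eq.symm fun hαt =>
      not_lt.mp fun htβ => Set.eq_empty_iff_forall_notMem.mp hgap t ⟨ht, hαt, htβ⟩
  have hz := hA.mul_norm_sq_le_inner_of_mem_orthogonal_ker hσ (hX ▸ hzX)
  have hy2 : 0 < ‖y‖ ^ 2 := by positivity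
  have hx0 : x ≠ 0 := by
    intro hx0
    rw [hx0, sub_zero, ← rq_mul_norm_sq] at hz
    nlinarith
  have hxy : x ≠ y := by
    intro hxy
    have := rq_mul_norm_sq A y
    rw [← hxy, hAx, real_inner_smul_right, real_inner_self_eq_norm_sq, hxy] at this
    nlinarith
  refine ⟨hx0, hxy, ?_⟩
  have hyS : y ∈ S := hS ▸ subset_span (Set.mem_insert_of_mem _ rfl)
  have hxS : x ∈ S := hS ▸ subset_span (Set.mem_insert _ _)
  have := improved_temple_bound hA.isSymmetric hAx (inner_right_of_mem_orthogonal hxX hzX) hz hx0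
    (sub_ne_zero.mpr hxy.symm) (by rw [add_sub_cancel]; exact hρ₁.le) S hxS (S.sub_mem hyS hxS)
  rwa [add_sub_cancel] at this

/-- Improved Temple bound at the bottom of the spectrum: if `α = λ_min(A)` is an isolated
eigenvalue of `A` with complete eigenspace `X`, `β > α` is the nearest larger spectral
point, and `y ≠ 0` satisfies `α < ρ(y) < β`, then with `x = P_X y` and `S = span{x,y}` one
has `x ≠ 0`, `x ≠ y`, and `(β − ρ(y))(ρ(y) − α) ≤ ‖P_S r(y)‖²/‖y‖²`. -/
theorem stmt_18 [CompleteSpace H] (A : H →L[ℝ] H) (hA : IsSelfAdjoint A)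
    (α β : ℝ) (hαβ : α < β)
    (hαmin : ∀ t ∈ spectrum ℝ A, α ≤ t)
    (hβspec : β ∈ spectrum ℝ A)
    (hgap : spectrum ℝ A ∩ Set.Ioo α β = ∅)
    (X : Submodule ℝ H) [HasOrthogonalProjection X]
    (hX : X = LinearMap.ker ((A - α • (1 : H →L[ℝ] H) : H →L[ℝ] H) : H →ₗ[ℝ] H))
    (hXne : X ≠ ⊥)
    (y : H) (hy : y ≠ 0) (hρ₁ : α < rq A y) (hρ₂ : rq A y < β)
    (S : Submodule ℝ H) [FiniteDimensional ℝ S]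
    (hS : S = Submodule.span ℝ ({(orthogonalProjection X y : H), y} : Set H)) :
    (orthogonalProjection X y : H) ≠ 0 ∧ (orthogonalProjection X y : H) ≠ y ∧
    (β - rq A y) * (rq A y - α)
      ≤ ‖(orthogonalProjection S (res A y) : H)‖ ^ 2 / ‖y‖ ^ 2 :=
  stmt_18_general A hA α β hαmin hgap X hX y hy hρ₁ hρ₂ S hS
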